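/- arXiv:2208.11598 — 2 statements merged into one kernel-verified Lean document; each statement's English description precedes it below -/
import Mathlib

section
/- For every τ ∈ ℂ with nonnegative real part (or τ ∈ ℝ), σ ∈ ℝ, μ, λ ∈ ℝ, and nonzero ξ ∈ ℝⁿ, exp(−τ((μ|ξ|² + iσ)Iₙ + (μ+λ) ξ ⊗ ξ)) = e^{−τ(μ|ξ|²+iσ)} Iₙ + (e^{−τ((2μ+λ)|ξ|²+iσ)} − e^{−τ(μ|ξ|²+iσ)}) (ξ ⊗ ξ)/|ξ|², where the matrices are regarded as complex matrices. -/
open Matrix Complex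

/-!
Put `S = |ξ|²` and `P = S⁻¹ ξ ⊗ ξ`. Since `(ξ ⊗ ξ)² = S (ξ ⊗ ξ)`, the matrix `P` is idempotent, and
the exponent equals `a I + d P` with `a = −τ(μS + iσ)` and `d = −τ(μ + λ)S`. The two summands commute,
and for an idempotent `P` the exponential series collapses to `exp(d P) = I + (e^d − 1) P`. Hence
`exp(a I + d P) = e^a I + (e^{a+d} − e^a) P`, and `a + d = −τ((2μ + λ)S + iσ)`.
-/

theorem NormedSpace.exp_smul_of_isIdempotentElem {𝔸 : Type*} [Ring 𝔸] [Algebra ℂ 𝔸]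
    [TopologicalSpace 𝔸] [IsTopologicalRing 𝔸] [ContinuousSMul ℂ 𝔸] [T2Space 𝔸]
    {P : 𝔸} (hP : IsIdempotentElem P) (c : ℂ) :
    exp (c • P) = 1 + (Complex.exp c - 1) • P := by
  have hterm : (fun k : ℕ => (k.factorial⁻¹ : ℂ) • (c • P) ^ k) =
      fun k => ((k.factorial⁻¹ : ℂ) • c ^ k) • P + if k = 0 then 1 - P else 0 := by
    funext k
    cases k with
    | zero => simp
    | succ k => simp only [smul_pow, hP.pow_succ_eq, smul_smul, smul_eq_mul, if_neg k.succ_ne_zero,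
        add_zero]
  have hsum : HasSum (fun k : ℕ => (k.factorial⁻¹ : ℂ) • (c • P) ^ k)
      (Complex.exp c • P + (1 - P)) := by
    rw [hterm, Complex.exp_eq_exp_ℂ]
    exact ((exp_series_hasSum_exp' c).smul_const P).add (hasSum_ite_eq 0 (1 - P))
  rw [exp_eq_tsum ℂ]
  exact hsum.tsum_eq.trans (by module)

theorem Matrix.exp_smul_one_add_smul_of_isIdempotentElem {m : Type*} [Fintype m] [DecidableEq m]
    {P : Matrix m m ℂ} (hP : IsIdempotentElem P) (a d : ℂ) :
    NormedSpace.exp (a • 1 + d • P) =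
      Complex.exp a • 1 + (Complex.exp (a + d) - Complex.exp a) • P := by
  have hcomm : Commute (a • (1 : Matrix m m ℂ)) (d • P) := (Commute.one_left _).smul_left a
  rw [Matrix.exp_add_of_commute _ _ hcomm, NormedSpace.exp_smul_of_isIdempotentElem hP,
    NormedSpace.exp_smul_of_isIdempotentElem IsIdempotentElem.one, Complex.exp_add]
  rw [show (1 : Matrix m m ℂ) + (Complex.exp a - 1) • 1 = Complex.exp a • 1 by module,
    smul_mul_assoc, one_mul]
  module

theorem Matrix.isIdempotentElem_inv_dotProduct_smul_vecMulVec {m K : Type*} [Fintype m] [Field K]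
    {u v : m → K} (h : v ⬝ᵥ u ≠ 0) : IsIdempotentElem ((v ⬝ᵥ u)⁻¹ • vecMulVec u v) := by
  rw [IsIdempotentElem, smul_mul_smul_comm, vecMulVec_mul_vecMulVec, vecMulVec_smul, smul_smul]
  congr 1
  field_simp

theorem stmt_3_general (n : ℕ) (τ : ℂ) (σ μ lam : ℝ) (ξ : Fin n → ℝ) (hξ : ξ ≠ 0) :
    NormedSpace.exp
        ((-τ) • (((μ * ∑ i, ξ i ^ 2 : ℝ) + (σ : ℂ) * Complex.I) •
            (1 : Matrix (Fin n) (Fin n) ℂ)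
          + ((μ : ℂ) + (lam : ℂ)) • (vecMulVec ξ ξ).map ((↑) : ℝ → ℂ))) =
      Complex.exp (-τ * ((μ * ∑ i, ξ i ^ 2 : ℝ) + (σ : ℂ) * Complex.I)) •
          (1 : Matrix (Fin n) (Fin n) ℂ)
        + (Complex.exp (-τ * (((2 * μ + lam) * ∑ i, ξ i ^ 2 : ℝ) + (σ : ℂ) * Complex.I))
            - Complex.exp (-τ * ((μ * ∑ i, ξ i ^ 2 : ℝ) + (σ : ℂ) * Complex.I))) •
          (((∑ i, ξ i ^ 2 : ℝ) : ℂ)⁻¹ • (vecMulVec ξ ξ).map ((↑) : ℝ → ℂ)) := by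
  set S : ℝ := ∑ i, ξ i ^ 2
  set v : Fin n → ℂ := fun i => ξ i
  have hmap : (vecMulVec ξ ξ).map ((↑) : ℝ → ℂ) = vecMulVec v v := by
    ext i j; simp [v, vecMulVec_apply]
  have hS : (S : ℂ) = v ⬝ᵥ v := by
    simp [S, v, dotProduct, sq]
  have hS0 : (S : ℂ) ≠ 0 := by
    rw [ofReal_ne_zero, show S = ξ ⬝ᵥ ξ by simp [S, dotProduct, sq]]
    exact dotProduct_self_eq_zero.not.mpr hξ
  have hP : IsIdempotentElem ((S : ℂ)⁻¹ • vecMulVec v v) := by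
    rw [hS] at hS0 ⊢
    exact isIdempotentElem_inv_dotProduct_smul_vecMulVec hS0
  have hexponent : -τ * ((μ * S : ℝ) + σ * I) + -τ * (μ + lam) * S =
      -τ * (((2 * μ + lam) * S : ℝ) + σ * I) := by
    push_cast
    ring
  rw [hmap, ← hexponent, ← exp_smul_one_add_smul_of_isIdempotentElem hP]
  congr 1
  rw [smul_add, smul_smul, smul_smul, smul_smul, mul_inv_cancel_right₀ hS0]

/-- For `τ ∈ ℂ` with nonnegative real part, `σ ∈ ℝ`, `μ, λ ∈ ℝ`, and nonzero `ξ ∈ ℝⁿ`,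
`exp(−τ((μ|ξ|² + iσ)Iₙ + (μ+λ) ξ⊗ξ)) = e^{−τ(μ|ξ|²+iσ)} Iₙ
  + (e^{−τ((2μ+λ)|ξ|²+iσ)} − e^{−τ(μ|ξ|²+iσ)}) (ξ⊗ξ)/|ξ|²`, as complex matrices. -/
theorem stmt_3 (n : ℕ) (τ : ℂ) (hτ : 0 ≤ τ.re) (σ μ lam : ℝ) (ξ : Fin n → ℝ) (hξ : ξ ≠ 0) :
    NormedSpace.exp
        ((-τ) • (((μ * ∑ i, ξ i ^ 2 : ℝ) + (σ : ℂ) * Complex.I) •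
            (1 : Matrix (Fin n) (Fin n) ℂ)
          + ((μ : ℂ) + (lam : ℂ)) • (vecMulVec ξ ξ).map ((↑) : ℝ → ℂ))) =
      Complex.exp (-τ * ((μ * ∑ i, ξ i ^ 2 : ℝ) + (σ : ℂ) * Complex.I)) •
          (1 : Matrix (Fin n) (Fin n) ℂ)
        + (Complex.exp (-τ * (((2 * μ + lam) * ∑ i, ξ i ^ 2 : ℝ) + (σ : ℂ) * Complex.I))
            - Complex.exp (-τ * ((μ * ∑ i, ξ i ^ 2 : ℝ) + (σ : ℂ) * Complex.I))) •
          (((∑ i, ξ i ^ 2 : ℝ) : ℂ)⁻¹ • (vecMulVec ξ ξ).map ((↑) : ℝ → ℂ)) :=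
  stmt_3_general n τ σ μ lam ξ hξ
end

section
/- For every s ∈ (0,1) and every complex number z with positive real part, one has z^s = − (s/Γ(1−s)) ∫₀^∞ (e^{−τz} − 1) τ^{−1−s} dτ, where z^s denotes the principal branch of the complex power and Γ is the Gamma function. -/
/-!
For `-1 < re σ < 0` the Mellin transform of `e^{-zτ} - 1` is `Γ(σ) z^{-σ}`; at `σ = -s`, together
with `Γ(1-s) = -s Γ(-s)`, this is the identity. Integrating by parts against `τ^σ` (the boundary
terms vanish since `e^{-zτ} - 1` is `O(τ)` at `0` and bounded at `∞`) reduces that transform to the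
Gamma integral `∫₀^∞ τ^σ e^{-zτ} dτ = Γ(σ+1) z^{-σ-1}`, which holds for real `z > 0` by scaling and
for `re z > 0` by analytic continuation in `z`.
-/

open MeasureTheory Set Filter Topology Asymptotics

lemma isBigO_ofReal_cpow_rpow {l : Filter ℝ} (hl : ∀ᶠ t in l, 0 < t) (σ : ℂ) :
    (fun t : ℝ => (t : ℂ) ^ σ) =O[l] (· ^ σ.re) :=
  isBigO_norm_left.1 <| EventuallyEq.isBigO <|
    hl.mono fun _ ht => Complex.norm_cpow_eq_rpow_re_of_pos ht σ

lemma tendsto_cpow_mul_of_isBigO_rpow {l : Filter ℝ} (hl : ∀ᶠ t in l, 0 < t) {f : ℝ → ℂ}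
    {c : ℝ} (hf : f =O[l] (· ^ c)) {σ : ℂ} (hlim : Tendsto (· ^ (σ.re + c)) l (𝓝 0)) :
    Tendsto (fun t : ℝ => (t : ℂ) ^ σ * f t) l (𝓝 0) :=
  ((isBigO_ofReal_cpow_rpow hl σ).mul hf).trans_tendsto <|
    hlim.congr' <| hl.mono fun _ ht => Real.rpow_add ht _ _

lemma tendsto_rpow_nhdsGT_zero {p : ℝ} (hp : 0 < p) : Tendsto (· ^ p) (𝓝[>] (0 : ℝ)) (𝓝 0) := by
  simpa [Real.zero_rpow hp.ne'] using
    (Real.continuousAt_rpow_const 0 p (Or.inr hp.le)).tendsto.mono_left nhdsWithin_le_nhds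

theorem mellin_add_one_of_hasDerivAt {f f' : ℝ → ℂ} {a b : ℝ} {σ : ℂ}
    (hf : ∀ t ∈ Ioi 0, HasDerivAt f (f' t) t)
    (hf_top : f =O[atTop] (· ^ (-a))) (hσ_top : σ.re < a)
    (hf_bot : f =O[𝓝[>] 0] (· ^ (-b))) (hσ_bot : b < σ.re)
    (hf' : MellinConvergent f' (σ + 1)) :
    mellin f' (σ + 1) = -σ * mellin f σ := by
  have hfc : MellinConvergent f σ := mellinConvergent_of_isBigO_rpow
    (ContinuousOn.locallyIntegrableOn (fun t ht => (hf t ht).continuousAt.continuousWithinAt)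
      measurableSet_Ioi) hf_top hσ_top hf_bot hσ_bot
  have hpow : ∀ t ∈ Ioi (0 : ℝ), HasDerivAt (fun t : ℝ => (t : ℂ) ^ σ) (σ * t ^ (σ - 1)) t :=
    fun t ht => (Complex.hasStrictDerivAt_cpow_const
      (Complex.ofReal_mem_slitPlane.2 ht)).hasDerivAt.comp_ofReal
  have h_zero := tendsto_cpow_mul_of_isBigO_rpow self_mem_nhdsWithin hf_bot
    (tendsto_rpow_nhdsGT_zero (by linarith))
  have h_top := tendsto_cpow_mul_of_isBigO_rpow (eventually_gt_atTop 0) hf_top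
    (by simpa [← sub_eq_add_neg] using tendsto_rpow_neg_atTop (sub_pos.2 hσ_top))
  have hibp := integral_Ioi_mul_deriv_eq_deriv_mul hpow hf
    (by simpa [MellinConvergent, Pi.mul_def] using hf')
    (by unfold IntegrableOn; simpa [Pi.mul_def, mul_assoc] using hfc.const_mul σ)
    h_zero h_top
  simp only [mellin, add_sub_cancel_right, smul_eq_mul, mul_assoc, integral_const_mul] at hibp ⊢
  simpa using hibp

namespace Complex

section GammaIntegral

variable {a z : ℂ}

lemma norm_cpow_mul_exp_neg_mul {t : ℝ} (ht : 0 < t) (a z : ℂ) :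
    ‖(t : ℂ) ^ (a - 1) * exp (-(z * t))‖ = t ^ (a.re - 1) * Real.exp (-(z.re * t)) := by
  simp [norm_cpow_eq_rpow_re_of_pos ht, norm_exp]

lemma continuousOn_cpow_mul_exp_neg_mul (a z : ℂ) :
    ContinuousOn (fun t : ℝ => (t : ℂ) ^ (a - 1) * exp (-(z * t))) (Ioi 0) := by
  refine ContinuousOn.mul (fun t ht => ?_) (by fun_prop)
  exact (continuousAt_ofReal_cpow_const _ _ (Or.inr (ne_of_gt ht))).continuousWithinAt

lemma integrableOn_cpow_mul_exp_neg_mul (ha : 0 < a.re) (hz : 0 < z.re) :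
    IntegrableOn (fun t : ℝ => (t : ℂ) ^ (a - 1) * exp (-(z * t))) (Ioi 0) := by
  have hreal :
      IntegrableOn (fun t : ℝ => t ^ (a.re - 1) * Real.exp (-z.re * t ^ (1 : ℝ))) (Ioi 0) :=
    integrableOn_rpow_mul_exp_neg_mul_rpow (by linarith) one_pos hz
  refine hreal.mono' ((continuousOn_cpow_mul_exp_neg_mul a z).aestronglyMeasurable
    measurableSet_Ioi) ?_
  filter_upwards [ae_restrict_mem measurableSet_Ioi] with t ht
  rw [norm_cpow_mul_exp_neg_mul ht, Real.rpow_one, neg_mul]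

lemma differentiableAt_integral_cpow_mul_exp_neg_mul (ha : 0 < a.re) (hz : 0 < z.re) :
    DifferentiableAt ℂ (fun w => ∫ t : ℝ in Ioi 0, (t : ℂ) ^ (a - 1) * exp (-(w * t))) z := by
  have hderiv : ∀ t : ℝ, ∀ w : ℂ, HasDerivAt (fun w => (t : ℂ) ^ (a - 1) * exp (-(w * t)))
      ((t : ℂ) ^ (a - 1) * exp (-(w * t)) * -t) w := fun t w =>
    (((hasDerivAt_id w).mul_const (t : ℂ)).neg.cexp.const_mul _).congr_deriv (by simp; ring)
  -- On the ball of radius `z.re / 2` the `w`-derivative is dominated by the integrand at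
  -- `(a + 1, z / 2)`.
  have h_bound : ∀ᵐ t : ℝ ∂volume.restrict (Ioi 0), ∀ w ∈ Metric.ball z (z.re / 2),
      ‖(t : ℂ) ^ (a - 1) * exp (-(w * t)) * -t‖ ≤
        ‖(t : ℂ) ^ (a + 1 - 1) * exp (-(z / 2 * t))‖ := by
    filter_upwards [ae_restrict_mem measurableSet_Ioi] with t (ht : 0 < t) w hw
    have hre : z.re / 2 ≤ w.re := by
      have := (abs_re_le_norm (w - z)).trans (mem_ball_iff_norm.mp hw).le
      rw [sub_re] at this
      linarith [neg_abs_le (w.re - z.re)]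
    calc ‖(t : ℂ) ^ (a - 1) * exp (-(w * t)) * -t‖
        = t ^ (a.re - 1) * t * Real.exp (-(w.re * t)) := by
          simp [norm_cpow_eq_rpow_re_of_pos ht, norm_exp, abs_of_pos ht]; ring
      _ ≤ t ^ (a.re - 1) * t * Real.exp (-(z / 2).re * t) := by
          gcongr; simpa using mul_le_mul_of_nonneg_right hre ht.le
      _ = ‖(t : ℂ) ^ (a + 1 - 1) * exp (-(z / 2 * t))‖ := by
          rw [norm_cpow_mul_exp_neg_mul ht, ← Real.rpow_add_one ht.ne']; simp
  exact (hasDerivAt_integral_of_dominated_loc_of_deriv_le (Metric.ball_mem_nhds z (half_pos hz))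
    (Eventually.of_forall fun w => (continuousOn_cpow_mul_exp_neg_mul a w).aestronglyMeasurable
      measurableSet_Ioi)
    (integrableOn_cpow_mul_exp_neg_mul ha hz) (((continuousOn_cpow_mul_exp_neg_mul a z).mul
      (continuous_ofReal.neg.continuousOn (s := Ioi 0))).aestronglyMeasurable
      measurableSet_Ioi) h_bound
    (integrableOn_cpow_mul_exp_neg_mul (by simp; linarith) (by simpa using hz)).norm
    (ae_of_all _ fun t w _ => hderiv t w)).2.differentiableAt

lemma eqOn_re_pos_of_eq_ofReal {f g : ℂ → ℂ} (hf : DifferentiableOn ℂ f {w | 0 < w.re})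
    (hg : DifferentiableOn ℂ g {w | 0 < w.re}) (hfg : ∀ x : ℝ, 0 < x → f x = g x) :
    EqOn f g {w | 0 < w.re} := by
  have hU : IsOpen {w : ℂ | 0 < w.re} := isOpen_lt continuous_const continuous_re
  refine (hf.analyticOnNhd hU).eqOn_of_preconnected_of_frequently_eq (hg.analyticOnNhd hU)
    (convex_halfSpace_re_gt 0).isPreconnected (by simp : (1 : ℂ) ∈ _) ?_
  have hofReal : Tendsto ofReal (𝓝[≠] 1) (𝓝[≠] 1) := by
    simpa using continuous_ofReal.continuousWithinAt.tendsto_nhdsWithin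
      (x := (1 : ℝ)) (t := {(1 : ℂ)}ᶜ) fun x hx => by simpa using hx
  exact hofReal.frequently (eventually_nhdsWithin_of_eventually_nhds
    ((eventually_gt_nhds one_pos).mono hfg)).frequently

theorem integral_cpow_mul_exp_neg_mul_Ioi_of_re_pos (ha : 0 < a.re) (hz : 0 < z.re) :
    ∫ t : ℝ in Ioi 0, (t : ℂ) ^ (a - 1) * exp (-(z * t)) = (1 / z) ^ a * Gamma a := by
  refine eqOn_re_pos_of_eq_ofReal
    (f := fun w => ∫ t : ℝ in Ioi 0, (t : ℂ) ^ (a - 1) * exp (-(w * t)))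
    (g := fun w => (1 / w) ^ a * Gamma a)
    (fun w hw => (differentiableAt_integral_cpow_mul_exp_neg_mul ha hw).differentiableWithinAt)
    (fun w hw => ?_) (fun x hx => integral_cpow_mul_exp_neg_mul_Ioi ha hx) hz
  have hinv : 0 < (1 / w).re := by
    rw [one_div, inv_re]; exact div_pos hw (normSq_pos.2 (ne_zero_of_re_pos hw))
  exact ((differentiableAt_const (1 : ℂ)).div differentiableAt_id (ne_zero_of_re_pos hw)
    |>.cpow_const (Or.inl hinv)).mul_const _ |>.differentiableWithinAt

end GammaIntegral

theorem mellin_exp_neg_mul_sub_one {z σ : ℂ} (hz : 0 < z.re) (hσ₁ : -1 < σ.re) (hσ₀ : σ.re < 0) :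
    mellin (fun t : ℝ => exp (-(z * t)) - 1) σ = (1 / z) ^ σ * Gamma σ := by
  have hderiv : ∀ t : ℝ, HasDerivAt (fun t : ℝ => exp (-(z * t)) - 1) (-z * exp (-(z * t))) t :=
    fun t => (((hasDerivAt_id (t : ℂ)).const_mul z).neg.cexp.sub_const 1).comp_ofReal.congr_deriv
      (by simp; ring)
  have h_top : (fun t : ℝ => exp (-(z * t)) - 1) =O[atTop] (· ^ (-(0 : ℝ))) := by
    have hexp : Tendsto (fun t : ℝ => exp (-(z * t))) atTop (𝓝 0) := by
      simpa [tendsto_exp_nhds_zero_iff] using tendsto_id.const_mul_atTop hz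
    simpa using (hexp.sub_const 1).isBigO_one ℝ
  have h_bot : (fun t : ℝ => exp (-(z * t)) - 1) =O[𝓝[>] 0] (· ^ (-(-1 : ℝ))) := by
    simpa using ((hderiv 0).isBigO_sub).mono nhdsWithin_le_nhds
  have hσ1 : 0 < (σ + 1).re := by simp; linarith
  have hf' : MellinConvergent (fun t : ℝ => -z * exp (-(z * t))) (σ + 1) := by
    simpa only [smul_eq_mul] using MellinConvergent.const_smul
      (f := fun t : ℝ => exp (-(z * t))) (integrableOn_cpow_mul_exp_neg_mul hσ1 hz) (-z)
  have hz0 : z ≠ 0 := ne_zero_of_re_pos hz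
  have hσ0 : σ ≠ 0 := by rintro rfl; simp at hσ₀
  have hmellin_deriv : mellin (fun t : ℝ => -z * exp (-(z * t))) (σ + 1) =
      -σ * ((1 / z) ^ σ * Gamma σ) := by
    simp only [mellin, smul_eq_mul, mul_left_comm _ (-z), integral_const_mul,
      integral_cpow_mul_exp_neg_mul_Ioi_of_re_pos hσ1 hz]
    rw [cpow_add _ _ (one_div_ne_zero hz0), cpow_one, Gamma_add_one _ hσ0]
    field_simp
  exact mul_left_cancel₀ (neg_ne_zero.2 hσ0) <|
    (mellin_add_one_of_hasDerivAt (fun t _ => hderiv t) h_top hσ₀ h_bot hσ₁ hf').symm.trans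
      hmellin_deriv

theorem cpow_eq_neg_div_Gamma_mul_mellin {s z : ℂ} (hs₀ : 0 < s.re) (hs₁ : s.re < 1)
    (hz : 0 < z.re) :
    z ^ s = -(s / Gamma (1 - s)) * mellin (fun t : ℝ => exp (-(z * t)) - 1) (-s) := by
  have hs : s ≠ 0 := by rintro rfl; simp at hs₀
  have hΓ : Gamma (1 - s) = -s * Gamma (-s) := by
    rw [sub_eq_neg_add, Gamma_add_one _ (neg_ne_zero.2 hs)]
  have hΓ₀ : Gamma (-s) ≠ 0 :=
    right_ne_zero_of_mul (hΓ ▸ Gamma_ne_zero_of_re_pos (by simpa using hs₁))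
  have harg : z.arg ≠ Real.pi := (mem_slitPlane_iff_arg.1 (mem_slitPlane_iff.2 (Or.inl hz))).1
  rw [mellin_exp_neg_mul_sub_one hz (by simpa using hs₁) (by simpa using hs₀), hΓ, cpow_neg,
    one_div, inv_cpow _ _ harg, inv_inv]
  field_simp

end Complex

/-- Balakrishnan scalar identity: for `s ∈ (0,1)` and `Re z > 0`,
`z^s = −(s/Γ(1−s)) ∫₀^∞ (e^{−τz} − 1) τ^{−1−s} dτ`. -/
theorem stmt_6 (s : ℝ) (hs : s ∈ Set.Ioo (0 : ℝ) 1) (z : ℂ) (hz : 0 < z.re) :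
    z ^ (s : ℂ) =
      -((s : ℂ) / (Real.Gamma (1 - s) : ℂ)) *
        ∫ τ in Set.Ioi (0 : ℝ), (Complex.exp (-(τ : ℂ) * z) - 1) * ((τ : ℂ) ^ (-1 - s : ℂ)) := by
  have hmellin : ∫ τ in Ioi (0 : ℝ), (Complex.exp (-(τ : ℂ) * z) - 1) * (τ : ℂ) ^ (-1 - s : ℂ) =
      mellin (fun t : ℝ => Complex.exp (-(z * t)) - 1) (-s) :=
    setIntegral_congr_fun measurableSet_Ioi fun τ _ => by simp only [smul_eq_mul]; ring_nf
  rw [hmellin, ← Complex.Gamma_ofReal, Complex.ofReal_sub, Complex.ofReal_one]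
  exact Complex.cpow_eq_neg_div_Gamma_mul_mellin (by simpa using hs.1) (by simpa using hs.2) hz
end
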